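/- arXiv:2509.11618 — 2 statements merged into one kernel-verified Lean document; each statement's English description precedes it below -/
import Mathlib

section
/- Suppose V̂ : [0,T] × ℝ^d → ℝ^d satisfies V̂(t, Px) = Qx + V̂(t,x) for all (t,x) ∈ [0,T] × ℝ^d, where P ∈ ℝ^{d×d} and Q := I − P, and suppose there exist constants L̂, C₀ > 0 and γ ≥ 1 such that |V̂(t,u) − V̂(s,v)| ≤ L̂ |u − v| + C₀ (1 + |u| + |v|)^γ |t − s| for all s, t ∈ [0,T] and u, v ∈ ℝ^d. Then there exists a constant C > 0 such that for all s, t ∈ [0,T] and u, v ∈ ℝ^d: |(u + V̂(t,u)) − (v + V̂(s,v))| ≤ (1 + L̂) |Pu − Pv| + C (1 + |Pu| + |Pv|)^γ |t − s|. -/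
/-!
The shift relation turns `u + V̂(t,u)` into `Pu + V̂(t,Pu)`, so the estimate is the triangle
inequality plus the hypothesis on `V̂` at the points `Pu`, `Pv`, with `C = C₀`.
-/

open Matrix

/-- Euclidean norm of a vector in `ℝ^d`. -/
noncomputable def vnorm {d : ℕ} (x : Fin d → ℝ) : ℝ :=
  Real.sqrt (∑ i, (x i) ^ 2)

lemma vnorm_eq_norm_toLp {d : ℕ} (x : Fin d → ℝ) :
    vnorm x = ‖WithLp.toLp 2 x‖ := by
  simp [EuclideanSpace.norm_eq, vnorm, sq_abs]

lemma vnorm_add_le {d : ℕ} (a b : Fin d → ℝ) :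
    vnorm (a + b) ≤ vnorm a + vnorm b := by
  simpa only [vnorm_eq_norm_toLp, WithLp.toLp_add] using norm_add_le _ _

lemma vnorm_add_sub_add_le {d : ℕ} (a b c e : Fin d → ℝ) :
    vnorm ((a + b) - (c + e)) ≤ vnorm (a - c) + vnorm (b - e) := by
  rw [add_sub_add_comm]
  exact vnorm_add_le _ _

lemma add_apply_eq_mulVec_add_apply_mulVec {n R : Type*} [Fintype n] [DecidableEq n] [Ring R]
    {P : Matrix n n R} {f : (n → R) → n → R}
    (hf : ∀ x, f (P *ᵥ x) = (1 - P) *ᵥ x + f x) (x : n → R) :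
    x + f x = P *ᵥ x + f (P *ᵥ x) := by
  rw [hf, sub_mulVec, one_mulVec]
  abel

theorem stmt5_general (T : ℝ) (d : ℕ)
    (Lhat C0 γ : ℝ) (hC0 : 0 < C0)
    (P : Matrix (Fin d) (Fin d) ℝ)
    (V : ℝ → (Fin d → ℝ) → Fin d → ℝ)
    -- `V̂(t, Px) = Qx + V̂(t,x)` with `Q = I − P`
    (hPQ : ∀ t ∈ Set.Icc (0:ℝ) T, ∀ x : Fin d → ℝ,
      V t (P.mulVec x) = (1 - P).mulVec x + V t x)
    -- `|V̂(t,u) − V̂(s,v)| ≤ L̂ |u − v| + C₀ (1 + |u| + |v|)^γ |t − s|`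
    (hlip : ∀ s ∈ Set.Icc (0:ℝ) T, ∀ t ∈ Set.Icc (0:ℝ) T, ∀ u v : Fin d → ℝ,
      vnorm (V t u - V s v) ≤
        Lhat * vnorm (u - v) + C0 * (1 + vnorm u + vnorm v) ^ γ * |t - s|) :
    ∃ C > 0, ∀ s ∈ Set.Icc (0:ℝ) T, ∀ t ∈ Set.Icc (0:ℝ) T, ∀ u v : Fin d → ℝ,
      vnorm ((u + V t u) - (v + V s v)) ≤
        (1 + Lhat) * vnorm (P.mulVec u - P.mulVec v) +
        C * (1 + vnorm (P.mulVec u) + vnorm (P.mulVec v)) ^ γ * |t - s| := by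
  refine ⟨C0, hC0, fun s hs t ht u v => ?_⟩
  rw [add_apply_eq_mulVec_add_apply_mulVec (hPQ t ht) u,
    add_apply_eq_mulVec_add_apply_mulVec (hPQ s hs) v]
  have hV := hlip s hs t ht (P *ᵥ u) (P *ᵥ v)
  have hsplit := vnorm_add_sub_add_le (P *ᵥ u) (V t (P *ᵥ u)) (P *ᵥ v) (V s (P *ᵥ v))
  linarith

theorem stmt5 (T : ℝ) (hT : 0 < T) (d : ℕ) (hd : 1 ≤ d)
    (Lhat C0 γ : ℝ) (hLhat : 0 < Lhat) (hC0 : 0 < C0) (hγ : 1 ≤ γ)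
    (P : Matrix (Fin d) (Fin d) ℝ)
    (V : ℝ → (Fin d → ℝ) → Fin d → ℝ)
    -- `V̂(t, Px) = Qx + V̂(t,x)` with `Q = I − P`
    (hPQ : ∀ t ∈ Set.Icc (0:ℝ) T, ∀ x : Fin d → ℝ,
      V t (P.mulVec x) = (1 - P).mulVec x + V t x)
    -- `|V̂(t,u) − V̂(s,v)| ≤ L̂ |u − v| + C₀ (1 + |u| + |v|)^γ |t − s|`
    (hlip : ∀ s ∈ Set.Icc (0:ℝ) T, ∀ t ∈ Set.Icc (0:ℝ) T, ∀ u v : Fin d → ℝ,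
      vnorm (V t u - V s v) ≤
        Lhat * vnorm (u - v) + C0 * (1 + vnorm u + vnorm v) ^ γ * |t - s|) :
    ∃ C > 0, ∀ s ∈ Set.Icc (0:ℝ) T, ∀ t ∈ Set.Icc (0:ℝ) T, ∀ u v : Fin d → ℝ,
      vnorm ((u + V t u) - (v + V s v)) ≤
        (1 + Lhat) * vnorm (P.mulVec u - P.mulVec v) +
        C * (1 + vnorm (P.mulVec u) + vnorm (P.mulVec v)) ^ γ * |t - s| :=
  stmt5_general T d Lhat C0 γ hC0 P V hPQ hlip
end

section
/- Let A := diag(1/2, 10, 0) ∈ ℝ^{3×3}, F(x) := (−x₁³, 0, 0)ᵀ and G(x) := diag(0, x₁², 0). Then for all x, y ∈ ℝ³: 2⟨Ax − Ay, F(x) − F(y)⟩ + |G(x) − G(y)|² = x₁ y₁ (x₁ − y₁)², and for every L₂ > 0 there exist x, y ∈ ℝ³ such that x₁ y₁ (x₁ − y₁)² > L₂ |x − y|². In particular there exists no constant L₂ > 0 with 2⟨Ax − Ay, F(x) − F(y)⟩ + |G(x) − G(y)|² ≤ L₂ |x − y|² for all x, y ∈ ℝ³. -/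
open Matrix

/-- Euclidean inner product on `ℝ^d`. -/
def vdot {d : ℕ} (x y : Fin d → ℝ) : ℝ := ∑ i, x i * y i

/-- Frobenius norm of a real matrix: `|B| = sqrt (trace (Bᵀ * B))`. -/
noncomputable def mnorm {d m : ℕ} (B : Matrix (Fin d) (Fin m) ℝ) : ℝ :=
  Real.sqrt ((Bᵀ * B).trace)

/-- `A = diag(1/2, 10, 0)`. -/
noncomputable def A14 : Matrix (Fin 3) (Fin 3) ℝ := Matrix.diagonal ![1/2, 10, 0]

/-- `F(x) = (−x₁³, 0, 0)ᵀ`. -/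
def F14 (x : Fin 3 → ℝ) : Fin 3 → ℝ := ![-(x 0) ^ 3, 0, 0]

/-- `G(x) = diag(0, x₁², 0)`. -/
def G14 (x : Fin 3 → ℝ) : Matrix (Fin 3) (Fin 3) ℝ := Matrix.diagonal ![0, (x 0) ^ 2, 0]

/-!
Only the first coordinate matters: the drift contributes `-(x₁ - y₁)(x₁³ - y₁³)` and the
diffusion `(x₁² - y₁²)²`, which sum to `x₁ y₁ (x₁ - y₁)²`. This quartic expression cannot be
bounded by `L₂ |x - y|²`: along the first axis, at unit distance, it grows quadratically in `x₁`.
-/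

theorem vnorm_sq {d : ℕ} (x : Fin d → ℝ) : vnorm x ^ 2 = ∑ i, x i ^ 2 :=
  Real.sq_sqrt (Finset.sum_nonneg fun i _ => sq_nonneg (x i))

theorem mnorm_sq {d m : ℕ} (B : Matrix (Fin d) (Fin m) ℝ) :
    mnorm B ^ 2 = ∑ j, ∑ i, B i j ^ 2 := by
  have htrace : (Bᵀ * B).trace = ∑ j, ∑ i, B i j ^ 2 := by
    simp only [trace, diag, mul_apply, transpose_apply, sq]
  rw [mnorm, htrace, Real.sq_sqrt (by positivity)]

theorem two_vdot_A14_sub_F14_sub (x y : Fin 3 → ℝ) :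
    2 * vdot (A14 *ᵥ x - A14 *ᵥ y) (F14 x - F14 y) = -((x 0 - y 0) * (x 0 ^ 3 - y 0 ^ 3)) := by
  simp only [vdot, A14, F14, Pi.sub_apply, mulVec_diagonal, Fin.sum_univ_three, cons_val_zero,
    cons_val_one, cons_val, sub_self, mul_zero, add_zero, zero_mul]
  ring

theorem mnorm_G14_sub_sq (x y : Fin 3 → ℝ) :
    mnorm (G14 x - G14 y) ^ 2 = (x 0 ^ 2 - y 0 ^ 2) ^ 2 := by
  rw [mnorm_sq]
  simp [G14, Fin.sum_univ_three, diagonal_apply]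

theorem drift_diffusion_eq (x y : Fin 3 → ℝ) :
    2 * vdot (A14 *ᵥ x - A14 *ᵥ y) (F14 x - F14 y) + mnorm (G14 x - G14 y) ^ 2 =
      x 0 * y 0 * (x 0 - y 0) ^ 2 := by
  rw [two_vdot_A14_sub_F14_sub, mnorm_G14_sub_sq]
  ring

theorem exists_mul_sub_sq_gt_mul_vnorm_sq (L : ℝ) :
    ∃ x y : Fin 3 → ℝ, x 0 * y 0 * (x 0 - y 0) ^ 2 > L * vnorm (x - y) ^ 2 := by
  refine ⟨![L + 2, 0, 0], ![L + 1, 0, 0], ?_⟩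
  have hdist : vnorm (![L + 2, 0, 0] - ![L + 1, 0, 0]) ^ 2 = 1 := by
    rw [vnorm_sq]
    norm_num [Fin.sum_univ_three, cons_val_two, tail_cons]
  rw [hdist]
  simp only [cons_val_zero, mul_one]
  nlinarith [sq_nonneg (L + 1)]

theorem stmt14 :
    (∀ x y : Fin 3 → ℝ,
      2 * vdot (A14.mulVec x - A14.mulVec y) (F14 x - F14 y) +
        mnorm (G14 x - G14 y) ^ 2 = x 0 * y 0 * (x 0 - y 0) ^ 2) ∧
    (∀ L2 : ℝ, 0 < L2 → ∃ x y : Fin 3 → ℝ,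
      x 0 * y 0 * (x 0 - y 0) ^ 2 > L2 * vnorm (x - y) ^ 2) ∧
    ¬ ∃ L2 : ℝ, 0 < L2 ∧ ∀ x y : Fin 3 → ℝ,
      2 * vdot (A14.mulVec x - A14.mulVec y) (F14 x - F14 y) +
        mnorm (G14 x - G14 y) ^ 2 ≤ L2 * vnorm (x - y) ^ 2 := by
  refine ⟨drift_diffusion_eq, fun L2 _ => exists_mul_sub_sq_gt_mul_vnorm_sq L2, ?_⟩
  rintro ⟨L2, -, hbound⟩
  obtain ⟨x, y, hgt⟩ := exists_mul_sub_sq_gt_mul_vnorm_sq L2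
  have hle := hbound x y
  rw [drift_diffusion_eq] at hle
  exact absurd hle (not_le.mpr hgt)
end
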